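/- Fix a positive integer k and let p_k(u) = ((1+u)^k - 1)/u = ∑_{j=1}^{k} C(k,j) u^{j-1}. There is a unique formal power series A over ℚ with zero constant term satisfying (1+A)^k = e^{x p_k(A)}, and it satisfies A = ∑_{n≥1} p_k(A)^{n-1} x^n/n!; consequently A is a Hurwitz series. -/

import Mathlib

/-!
Since `(1 + A)^k = 1 + A p_k(A)` and `e^{x p} = 1 + Φ(p) p` with `Φ(p) = ∑_{n ≥ 1} p^{n-1} x^n / n!`,
and `p_k(A)` has constant term `k ≠ 0`, the equation is equivalent to the fixed-point equation
`A = Φ(p_k(A))`. The coefficient of `x^m` in `Φ(p_k(A))` only depends on `A mod x^m`, so this map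
has a unique fixed point, built coefficient by coefficient. Hurwitz series form a ring (the
binomial coefficients absorb the factorials of a product) containing every `x^n / n!`, so
`A ↦ Φ(p_k(A))` preserves them; as the `m`-th coefficient of the fixed point is that of the image
of its truncation below degree `m`, induction on `m` shows that the fixed point is Hurwitz.
-/

open PowerSeries

/-- A Hurwitz series: a formal power series `∑ f_n x^n / n!` over `ℚ` with all
`f_n = n! · (coefficient of x^n)` integers. -/
def IsHurwitz (f : PowerSeries ℚ) : Prop :=
  ∀ n : ℕ, ∃ m : ℤ, (n.factorial : ℚ) * PowerSeries.coeff n f = (m : ℚ)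

/-- Composition `f(g(x))` of formal power series, valid when `g` has zero
constant term. -/
noncomputable def PowerSeries.comp (f g : PowerSeries ℚ) : PowerSeries ℚ :=
  PowerSeries.mk fun n =>
    ∑ k ∈ Finset.range (n + 1), PowerSeries.coeff k f * PowerSeries.coeff n (g ^ k)

/-- The formal exponential `e^S` of a power series `S` with zero constant term. -/
noncomputable def PowerSeries.expOf (S : PowerSeries ℚ) : PowerSeries ℚ :=
  PowerSeries.comp (exp ℚ) S

/-- `p_k(u) = ((1+u)^k - 1)/u = ∑_{j=1}^{k} C(k,j) u^{j-1}`, evaluated at a power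
series `u`. -/
noncomputable def pPoly (k : ℕ) (u : PowerSeries ℚ) : PowerSeries ℚ :=
  ∑ j ∈ Finset.range k, PowerSeries.C (k.choose (j + 1) : ℚ) * u ^ j

open Finset
open scoped Nat

namespace PowerSeries

section Contraction

variable {R : Type*} [CommRing R]

def IsXAdicContraction (F : R⟦X⟧ → R⟦X⟧) : Prop :=
  ∀ (m : ℕ) (A B : R⟦X⟧), X ^ m ∣ A - B → coeff m (F A) = coeff m (F B)

noncomputable def fixedPointCoeff (F : R⟦X⟧ → R⟦X⟧) : ℕ → R
  | m => coeff m (F (mk fun j => if _ : j < m then fixedPointCoeff F j else 0))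

lemma X_pow_dvd_sub_of_coeff_eq {m : ℕ} {A B : R⟦X⟧} (h : ∀ j < m, coeff j A = coeff j B) :
    X ^ m ∣ A - B :=
  X_pow_dvd_iff.mpr fun j hj => by rw [map_sub, h j hj, sub_self]

theorem IsXAdicContraction.eq_of_isFixedPt {F : R⟦X⟧ → R⟦X⟧} (hF : IsXAdicContraction F)
    {A B : R⟦X⟧} (hA : F A = A) (hB : F B = B) : A = B := by
  ext m
  induction m using Nat.strong_induction_on with
  | _ m ih => rw [← hA, ← hB, hF m A B (X_pow_dvd_sub_of_coeff_eq ih)]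

theorem IsXAdicContraction.existsUnique_fixedPoint {F : R⟦X⟧ → R⟦X⟧}
    (hF : IsXAdicContraction F) : ∃! A, F A = A := by
  have hfix : F (mk (fixedPointCoeff F)) = mk (fixedPointCoeff F) := by
    ext m
    rw [coeff_mk, fixedPointCoeff]
    refine hF m _ _ (X_pow_dvd_sub_of_coeff_eq fun j hj => ?_)
    rw [coeff_mk, coeff_mk, dif_pos hj]
  exact ⟨_, hfix, fun B hB => hF.eq_of_isFixedPt hB hfix⟩

end Contraction

lemma factorial_mul_coeff_mul (f g : ℚ⟦X⟧) (m : ℕ) :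
    (m ! : ℚ) * coeff m (f * g) = ∑ ij ∈ antidiagonal m,
      ((ij.1 + ij.2).choose ij.2 : ℚ) * ((ij.1 ! * coeff ij.1 f) * (ij.2 ! * coeff ij.2 g)) := by
  rw [coeff_mul, mul_sum]
  refine sum_congr rfl fun ij hij => ?_
  rw [← mem_antidiagonal.mp hij, ← Nat.add_choose_mul_factorial_mul_factorial]
  push_cast
  ring

def hurwitzSubring : Subring ℚ⟦X⟧ where
  carrier := {f | ∀ n, (n ! : ℚ) * coeff n f ∈ (⊥ : Subring ℚ)}
  zero_mem' n := by simp
  one_mem' n := by rcases n with _ | n <;> simp [coeff_one]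
  add_mem' hf hg n := by rw [map_add, mul_add]; exact add_mem (hf n) (hg n)
  neg_mem' hf n := by rw [map_neg, mul_neg]; exact neg_mem (hf n)
  mul_mem' {f g} hf hg n := by
    rw [factorial_mul_coeff_mul]
    exact sum_mem fun ij _ => mul_mem (natCast_mem _ _) (mul_mem (hf _) (hg _))

lemma mem_hurwitzSubring_iff {f : ℚ⟦X⟧} : f ∈ hurwitzSubring ↔ IsHurwitz f :=
  forall_congr' fun _ => Subring.mem_bot.trans <| exists_congr fun _ => eq_comm

theorem IsXAdicContraction.mem_hurwitzSubring_of_isFixedPt {F : ℚ⟦X⟧ → ℚ⟦X⟧}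
    (hF : IsXAdicContraction F) (hH : ∀ B ∈ hurwitzSubring, F B ∈ hurwitzSubring)
    {A : ℚ⟦X⟧} (hA : F A = A) : A ∈ hurwitzSubring := by
  intro m
  induction m using Nat.strong_induction_on with
  | _ m ih =>
    have htrunc : (trunc m A : ℚ⟦X⟧) ∈ hurwitzSubring := fun j => by
      rw [Polynomial.coeff_coe, coeff_trunc]
      split_ifs with hj
      · exact ih j hj
      · simp
    have hdvd : X ^ m ∣ A - (trunc m A : ℚ⟦X⟧) :=
      X_pow_dvd_sub_of_coeff_eq fun j hj => by rw [Polynomial.coeff_coe, coeff_trunc, if_pos hj]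
    rw [← hA, hF m _ _ hdvd]
    exact hH _ htrunc m

/-- `∑_{n ≥ 1} p^(n-1) x^n / n!`, written coefficientwise. -/
noncomputable def postnikovSeries (p : ℚ⟦X⟧) : ℚ⟦X⟧ :=
  mk fun m => ∑ n ∈ Icc 1 m, coeff m (p ^ (n - 1) * X ^ n) / (n ! : ℚ)

lemma constantCoeff_postnikovSeries (p : ℚ⟦X⟧) : constantCoeff (postnikovSeries p) = 0 := by
  rw [← coeff_zero_eq_constantCoeff_apply]
  simp [postnikovSeries]

lemma coeff_postnikovSeries_of_le (p : ℚ⟦X⟧) {m N : ℕ} (h : m ≤ N) :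
    coeff m (postnikovSeries p) =
      coeff m (∑ n ∈ Icc 1 N, C (n ! : ℚ)⁻¹ * (p ^ (n - 1) * X ^ n)) := by
  simp only [postnikovSeries, coeff_mk, map_sum, coeff_C_mul, div_eq_inv_mul]
  refine sum_subset (Icc_subset_Icc_right h) fun n hn hnm => ?_
  rw [coeff_mul_X_pow', if_neg (by simp_all), mul_zero]

lemma coeff_postnikovSeries_congr {p q : ℚ⟦X⟧} {m : ℕ} (h : X ^ m ∣ p - q) :
    coeff m (postnikovSeries p) = coeff m (postnikovSeries q) := by
  simp only [postnikovSeries, coeff_mk]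
  refine sum_congr rfl fun n hn => ?_
  have hdvd : X ^ (m + 1) ∣ (p ^ (n - 1) - q ^ (n - 1)) * X ^ n :=
    pow_succ (X : ℚ⟦X⟧) m ▸ mul_dvd_mul (h.trans (sub_dvd_pow_sub_pow _ _ _))
      (dvd_pow_self _ (by simp_all; omega))
  rw [← sub_eq_zero, ← sub_div, ← map_sub, ← sub_mul, X_pow_dvd_iff.mp hdvd m m.lt_succ_self,
    zero_div]

lemma postnikovSeries_mem_hurwitzSubring {p : ℚ⟦X⟧} (hp : p ∈ hurwitzSubring) :
    postnikovSeries p ∈ hurwitzSubring := by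
  have hX (n : ℕ) : C (n ! : ℚ)⁻¹ * X ^ n ∈ hurwitzSubring := fun j => by
    rw [coeff_C_mul_X_pow]
    split_ifs with hj
    · simp [hj, Nat.factorial_ne_zero]
    · simp
  intro m
  rw [coeff_postnikovSeries_of_le p le_rfl]
  refine (sum_mem fun n _ => ?_ : _ ∈ hurwitzSubring) m
  rw [mul_left_comm]
  exact mul_mem (pow_mem hp _) (hX n)

theorem expOf_X_mul (p : ℚ⟦X⟧) : expOf (X * p) = 1 + postnikovSeries p * p := by
  ext m
  have hexp : coeff m (expOf (X * p)) =
      coeff m (∑ n ∈ range (m + 1), C (n ! : ℚ)⁻¹ * (X * p) ^ n) := by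
    simp [expOf, comp, coeff_exp, coeff_C_mul]
  have htrunc : coeff m (postnikovSeries p * p) =
      coeff m ((∑ n ∈ Icc 1 m, C (n ! : ℚ)⁻¹ * (p ^ (n - 1) * X ^ n)) * p) := by
    simp only [coeff_mul]
    refine sum_congr rfl fun ij hij => ?_
    rw [coeff_postnikovSeries_of_le p (HasAntidiagonal.antidiagonal.fst_le hij)]
  have hsum : (∑ n ∈ Icc 1 m, C (n ! : ℚ)⁻¹ * (p ^ (n - 1) * X ^ n)) * p =
      ∑ n ∈ Icc 1 m, C (n ! : ℚ)⁻¹ * (X * p) ^ n := by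
    rw [sum_mul]
    refine sum_congr rfl fun n hn => ?_
    obtain ⟨n, rfl⟩ := Nat.exists_eq_add_of_le' (mem_Icc.mp hn).1
    rw [Nat.add_sub_cancel, pow_succ, mul_pow]
    ring
  rw [hexp, map_add, htrunc, hsum, ← map_add, range_eq_Ico,
    sum_eq_sum_Ico_succ_bot (by omega : 0 < m + 1), zero_add, Ico_add_one_right_eq_Icc]
  simp

end PowerSeries

lemma sub_dvd_pPoly_sub (k : ℕ) (A B : ℚ⟦X⟧) : A - B ∣ pPoly k A - pPoly k B := by
  rw [pPoly, pPoly, ← sum_sub_distrib]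
  exact dvd_sum fun j _ => by rw [← mul_sub]; exact (sub_dvd_pow_sub_pow A B j).mul_left _

lemma pPoly_mem_hurwitzSubring (k : ℕ) {A : ℚ⟦X⟧} (hA : A ∈ hurwitzSubring) :
    pPoly k A ∈ hurwitzSubring :=
  sum_mem fun j _ => mul_mem (by simp [natCast_mem]) (pow_mem hA j)

lemma one_add_pow_eq_one_add_mul_pPoly (k : ℕ) (A : ℚ⟦X⟧) :
    (1 + A) ^ k = 1 + A * pPoly k A := by
  rw [add_comm 1 A, add_pow, sum_range_succ', pPoly, mul_sum, add_comm]
  simp only [one_pow, mul_one, pow_zero, Nat.choose_zero_right, Nat.cast_one, map_natCast]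
  congr 1
  exact sum_congr rfl fun j _ => by ring

lemma constantCoeff_pPoly (k : ℕ) {A : ℚ⟦X⟧} (hA : constantCoeff A = 0) :
    constantCoeff (pPoly k A) = k := by
  rcases k with _ | k
  · simp [pPoly]
  rw [pPoly, map_sum, sum_eq_single 0 (fun j _ hj => by simp [hA, hj]) (by simp)]
  simp

lemma isXAdicContraction_postnikovSeries_pPoly (k : ℕ) :
    IsXAdicContraction fun A => postnikovSeries (pPoly k A) :=
  fun _ A B h => coeff_postnikovSeries_congr (h.trans (sub_dvd_pPoly_sub k A B))

lemma one_add_pow_eq_expOf_iff {k : ℕ} (hk : 0 < k) {A : ℚ⟦X⟧} (hA : constantCoeff A = 0) :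
    (1 + A) ^ k = expOf (X * pPoly k A) ↔ postnikovSeries (pPoly k A) = A := by
  have hp : pPoly k A ≠ 0 := fun h => by
    simpa [h, eq_comm, hk.ne'] using constantCoeff_pPoly k hA
  rw [one_add_pow_eq_one_add_mul_pPoly, expOf_X_mul, add_right_inj, mul_left_inj' hp, eq_comm]

/-- For a positive integer `k`, there is a unique formal power series `A` over `ℚ`
with zero constant term satisfying `(1+A)^k = e^{x·p_k(A)}`; moreover any such `A`
satisfies `A = ∑_{n≥1} p_k(A)^{n-1} x^n/n!` (written coefficientwise), and
consequently `A` is a Hurwitz series. -/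
theorem generalized_postnikov (k : ℕ) (hk : 0 < k) :
    (∃! A : PowerSeries ℚ, PowerSeries.constantCoeff A = 0 ∧
        (1 + A) ^ k = PowerSeries.expOf (PowerSeries.X * pPoly k A)) ∧
    ∀ A : PowerSeries ℚ, PowerSeries.constantCoeff A = 0 →
      (1 + A) ^ k = PowerSeries.expOf (PowerSeries.X * pPoly k A) →
      (A = (PowerSeries.mk fun m =>
          ∑ n ∈ Finset.Icc 1 m,
            PowerSeries.coeff m ((pPoly k A) ^ (n - 1) * PowerSeries.X ^ n)
              / (n.factorial : ℚ)) ∧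
        IsHurwitz A) := by
  have hF := isXAdicContraction_postnikovSeries_pPoly k
  obtain ⟨A₀, hA₀, huniq⟩ := hF.existsUnique_fixedPoint
  have hA₀0 : constantCoeff A₀ = 0 := hA₀ ▸ constantCoeff_postnikovSeries _
  refine ⟨⟨A₀, ⟨hA₀0, (one_add_pow_eq_expOf_iff hk hA₀0).mpr hA₀⟩,
    fun B ⟨hB0, hB⟩ => huniq B ((one_add_pow_eq_expOf_iff hk hB0).mp hB)⟩, fun A hA0 hA => ?_⟩
  have hfix := (one_add_pow_eq_expOf_iff hk hA0).mp hA
  have hH B (hB : B ∈ hurwitzSubring) : postnikovSeries (pPoly k B) ∈ hurwitzSubring :=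
    postnikovSeries_mem_hurwitzSubring (pPoly_mem_hurwitzSubring k hB)
  exact ⟨hfix.symm, mem_hurwitzSubring_iff.mp (hF.mem_hurwitzSubring_of_isFixedPt hH hfix)⟩
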